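/- For all admissible strategies ϑ, δ ∈ Θ and every k ∈ {1,…,T}, one has P-almost surely U_{k−1}(ϑ) − U_{k−1}(ϑ + δ1_{{k}}) = −δ_k ( E[ΔS_k | F_{k−1}] − γ Cov[ΔS_k, Σ_{i=k}^T ϑ_i ΔS_i | F_{k−1}] ) + (γ/2) δ_k² Var[ΔS_k | F_{k−1}]. -/

import Mathlib

/-!
Write `V_T(x, ϑ) = c + Y` with `c = V_{k-1}(x, ϑ)` known at time `k - 1` and
`Y = ∑_{i=k}^T ϑ_i ΔS_i`; the perturbation adds `W = δ_k ΔS_k` with `δ_k` known at time `k - 1`.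
Predictable factors pull out of conditional expectations and `c` drops out of conditional
covariances, so `E[V + W | F_{k-1}] = E[V | F_{k-1}] + δ_k E[ΔS_k | F_{k-1}]` and
`Var[V + W | F_{k-1}] = Var[V | F_{k-1}] + 2 δ_k Cov[ΔS_k, Y | F_{k-1}] + δ_k² Var[ΔS_k | F_{k-1}]`.

The only analytic point is that each `ϑ_i ΔS_i` is square integrable. For the drift part this is
the second admissibility condition; for the martingale part, `E[ϑ_i² E[(ΔM_i)² | F_{i-1}]] < ∞`
gives `E[ϑ_i² (ΔM_i)²] < ∞` by truncating `ϑ_i` and monotone convergence.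
-/

open MeasureTheory Finset

noncomputable section

namespace TCMV

variable {Ω : Type*}

/-- Conditional variance of `X` given the σ-algebra `m`. -/
def condVar [MeasurableSpace Ω] (μ : Measure Ω) (m : MeasurableSpace Ω) (X : Ω → ℝ) : Ω → ℝ :=
  μ[fun ω => (X ω - (μ[X|m]) ω) ^ 2 | m]

/-- Conditional covariance of `X` and `Y` given the σ-algebra `m`. -/
def condCov [MeasurableSpace Ω] (μ : Measure Ω) (m : MeasurableSpace Ω) (X Y : Ω → ℝ) : Ω → ℝ :=
  fun ω => (μ[fun ω' => X ω' * Y ω'|m]) ω - (μ[X|m]) ω * (μ[Y|m]) ω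

variable [m0 : MeasurableSpace Ω]

/-- The increment `ΔS_k = S_k - S_{k-1}`. -/
def dS (S : ℕ → Ω → ℝ) (k : ℕ) : Ω → ℝ := fun ω => S k ω - S (k - 1) ω

/-- The predictable (drift) part of the Doob decomposition: `ΔA_k = E[ΔS_k | F_{k-1}]`. -/
def dA (μ : Measure Ω) (ℱ : Filtration ℕ m0) (S : ℕ → Ω → ℝ) (k : ℕ) : Ω → ℝ :=
  μ[dS S k | ℱ (k - 1)]

/-- The martingale part of the Doob decomposition: `ΔM_k = ΔS_k - E[ΔS_k | F_{k-1}]`. -/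
def dM (μ : Measure Ω) (ℱ : Filtration ℕ m0) (S : ℕ → Ω → ℝ) (k : ℕ) : Ω → ℝ :=
  fun ω => dS S k ω - dA μ ℱ S k ω

/-- The set `Θ` of admissible strategies: predictable with the two square-integrability
properties. -/
def Admissible (μ : Measure Ω) (ℱ : Filtration ℕ m0) (S : ℕ → Ω → ℝ) (T : ℕ)
    (ϑ : ℕ → Ω → ℝ) : Prop :=
  (∀ k ∈ Finset.Icc 1 T, StronglyMeasurable[ℱ (k - 1)] (ϑ k)) ∧
  Integrable (fun ω => ∑ k ∈ Finset.Icc 1 T,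
      (ϑ k ω) ^ 2 * (μ[fun ω' => (dM μ ℱ S k ω') ^ 2 | ℱ (k - 1)]) ω) μ ∧
  Integrable (fun ω => (∑ k ∈ Finset.Icc 1 T, |ϑ k ω * dA μ ℱ S k ω|) ^ 2) μ

/-- The wealth process `V_k(x, ϑ) = x + ∑_{i=1}^k ϑ_i ΔS_i`. -/
def wealth (S : ℕ → Ω → ℝ) (x : ℝ) (ϑ : ℕ → Ω → ℝ) (k : ℕ) : Ω → ℝ :=
  fun ω => x + ∑ i ∈ Finset.Icc 1 k, ϑ i ω * dS S i ω

/-- The conditional mean–variance criterion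
`U_k(ϑ) = E[V_T(x,ϑ)|F_k] - (γ/2) Var[V_T(x,ϑ)|F_k]`. -/
def U (μ : Measure Ω) (ℱ : Filtration ℕ m0) (S : ℕ → Ω → ℝ) (T : ℕ) (x γ : ℝ)
    (ϑ : ℕ → Ω → ℝ) (k : ℕ) : Ω → ℝ :=
  fun ω => (μ[wealth S x ϑ T | ℱ k]) ω - γ / 2 * condVar μ (ℱ k) (wealth S x ϑ T) ω

/-- The local perturbation `ϑ + δ 1_{{k}}` of `ϑ` by `δ` at time `k`. -/
def perturb (ϑ δ : ℕ → Ω → ℝ) (k : ℕ) : ℕ → Ω → ℝ :=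
  fun j => if j = k then (fun ω => ϑ k ω + δ k ω) else ϑ j

/-- A strategy is locally mean–variance efficient if local perturbations never increase the
conditional mean–variance criterion. -/
def IsLMVE (μ : Measure Ω) (ℱ : Filtration ℕ m0) (S : ℕ → Ω → ℝ) (T : ℕ) (x γ : ℝ)
    (θ : ℕ → Ω → ℝ) : Prop :=
  ∀ k ∈ Finset.Icc 1 T, ∀ δ : ℕ → Ω → ℝ, Admissible μ ℱ S T δ →
    ∀ᵐ ω ∂μ, U μ ℱ S T x γ (perturb θ δ k) (k - 1) ω ≤ U μ ℱ S T x γ θ (k - 1) ω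

/-- The structure condition (SC): `ΔA_k = 0` a.s. on `{E[(ΔM_k)^2 | F_{k-1}] = 0}`. -/
def SC (μ : Measure Ω) (ℱ : Filtration ℕ m0) (S : ℕ → Ω → ℝ) (T : ℕ) : Prop :=
  ∀ k ∈ Finset.Icc 1 T, ∀ᵐ ω ∂μ,
    (μ[fun ω' => (dM μ ℱ S k ω') ^ 2 | ℱ (k - 1)]) ω = 0 → dA μ ℱ S k ω = 0

/-- The process `λ_k = ΔA_k / E[(ΔM_k)^2 | F_{k-1}]` (with the convention `0/0 = 0`). -/
def lam (μ : Measure Ω) (ℱ : Filtration ℕ m0) (S : ℕ → Ω → ℝ) (k : ℕ) : Ω → ℝ :=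
  fun ω => dA μ ℱ S k ω / (μ[fun ω' => (dM μ ℱ S k ω') ^ 2 | ℱ (k - 1)]) ω

/-- The mean–variance tradeoff process `K_k = ∑_{i=1}^k λ_i ΔA_i`. -/
def MVT (μ : Measure Ω) (ℱ : Filtration ℕ m0) (S : ℕ → Ω → ℝ) (k : ℕ) : Ω → ℝ :=
  fun ω => ∑ i ∈ Finset.Icc 1 k, lam μ ℱ S i ω * dA μ ℱ S i ω

/-- The Galtchouk–Kunita–Watanabe integrand of `Y_T(ψ) = ∑_{i=1}^T ψ_i ΔA_i` with respect to the
martingale part `M`: `ξ_k(ψ) = E[Y_T(ψ) ΔM_k | F_{k-1}] / E[(ΔM_k)^2 | F_{k-1}]`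
(with the convention `0/0 = 0`). -/
def gkw (μ : Measure Ω) (ℱ : Filtration ℕ m0) (S : ℕ → Ω → ℝ) (T : ℕ)
    (ψ : ℕ → Ω → ℝ) (k : ℕ) : Ω → ℝ :=
  fun ω =>
    (μ[fun ω' => (∑ i ∈ Finset.Icc 1 T, ψ i ω' * dA μ ℱ S i ω') * dM μ ℱ S k ω' | ℱ (k - 1)]) ω
      / (μ[fun ω' => (dM μ ℱ S k ω') ^ 2 | ℱ (k - 1)]) ω

end TCMV

-- Reopened to drop the ambient instance `m0` of the definitions above, so that a sub-σ-algebra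
-- `m` can be bound alongside it.
namespace TCMV

variable {Ω : Type*}

section ConditionalMoments

variable {m m0 : MeasurableSpace Ω} {μ : Measure Ω} {X Y c δ : Ω → ℝ}

theorem condCov_eq : condCov μ m X Y = μ[X * Y | m] - μ[X | m] * μ[Y | m] := rfl

theorem condCov_comm (X Y : Ω → ℝ) : condCov μ m X Y = condCov μ m Y X := by
  rw [condCov_eq, condCov_eq, mul_comm X, mul_comm μ[X | m]]

variable [IsFiniteMeasure μ]

theorem condVar_ae_eq_condExp_sq_sub_sq_condExp (hm : m ≤ m0) (hX : MemLp X 2 μ) :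
    condVar μ m X =ᵐ[μ] μ[X ^ 2 | m] - μ[X | m] ^ 2 :=
  ProbabilityTheory.condVar_ae_eq_condExp_sq_sub_sq_condExp hm hX

theorem condVar_add (hm : m ≤ m0) (hX : MemLp X 2 μ) (hY : MemLp Y 2 μ) :
    condVar μ m (X + Y) =ᵐ[μ] condVar μ m X + 2 * condCov μ m X Y + condVar μ m Y := by
  have hX₂ : Integrable (X ^ 2) μ := hX.integrable_sq
  have hY₂ : Integrable (Y ^ 2) μ := hY.integrable_sq
  have hXY : Integrable (2 * (X * Y)) μ := (hX.integrable_mul hY).const_mul 2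
  have hsq : (X + Y) ^ 2 = X ^ 2 + 2 * (X * Y) + Y ^ 2 := by ring
  filter_upwards [condVar_ae_eq_condExp_sq_sub_sq_condExp hm (hX.add hY),
    condVar_ae_eq_condExp_sq_sub_sq_condExp hm hX, condVar_ae_eq_condExp_sq_sub_sq_condExp hm hY,
    condExp_add (m := m) (hX.integrable one_le_two) (hY.integrable one_le_two),
    condExp_add (m := m) (hX₂.add hXY) hY₂, condExp_add (m := m) hX₂ hXY,
    condExp_ofNat (m := m) (μ := μ) 2 (X * Y)] with ω hVar hVarX hVarY h₁ h₂ h₃ h₄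
  simp only [condCov_eq, hsq, Pi.add_apply, Pi.sub_apply, Pi.mul_apply, Pi.pow_apply] at *
  rw [hVar, hVarX, hVarY, h₁, h₂, h₃, h₄]
  simp only [Pi.ofNat_apply]
  ring

theorem condCov_mul_left_of_stronglyMeasurable (hδ : StronglyMeasurable[m] δ)
    (hX : MemLp X 2 μ) (hδX : MemLp (δ * X) 2 μ) (hY : MemLp Y 2 μ) :
    condCov μ m (δ * X) Y =ᵐ[μ] δ * condCov μ m X Y := by
  have hδXY : Integrable (δ * (X * Y)) μ := by
    rw [← mul_assoc]; exact hδX.integrable_mul hY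
  filter_upwards [condExp_mul_of_stronglyMeasurable_left hδ hδXY (hX.integrable_mul hY),
    condExp_mul_of_stronglyMeasurable_left hδ (hδX.integrable one_le_two)
      (hX.integrable one_le_two)] with ω h₁ h₂
  simp only [condCov_eq, mul_assoc, Pi.sub_apply, Pi.mul_apply] at *
  rw [h₁, h₂]
  ring

theorem condCov_add_right_of_stronglyMeasurable (hm : m ≤ m0) (hc : StronglyMeasurable[m] c)
    (hX : MemLp X 2 μ) (hc₂ : MemLp c 2 μ) (hY : MemLp Y 2 μ) :
    condCov μ m X (c + Y) =ᵐ[μ] condCov μ m X Y := by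
  have hcX : Integrable (c * X) μ := hc₂.integrable_mul hX
  have hc₁ : Integrable c μ := hc₂.integrable one_le_two
  filter_upwards [condExp_add (m := m) hcX (hX.integrable_mul hY),
    condExp_add (m := m) hc₁ (hY.integrable one_le_two),
    condExp_mul_of_stronglyMeasurable_left hc hcX (hX.integrable one_le_two)] with ω h₁ h₂ h₃
  have hsum : X * (c + Y) = c * X + X * Y := by ring
  simp only [condCov_eq, hsum, condExp_of_stronglyMeasurable hm hc hc₁, Pi.add_apply,
    Pi.sub_apply, Pi.mul_apply] at *
  rw [h₁, h₂, h₃]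
  ring

theorem condVar_mul_of_stronglyMeasurable (hm : m ≤ m0) (hδ : StronglyMeasurable[m] δ)
    (hX : MemLp X 2 μ) (hδX : MemLp (δ * X) 2 μ) :
    condVar μ m (δ * X) =ᵐ[μ] δ ^ 2 * condVar μ m X := by
  have hsq : (δ * X) ^ 2 = δ ^ 2 * X ^ 2 := by ring
  have hδX₂ : Integrable (δ ^ 2 * X ^ 2) μ := hsq ▸ hδX.integrable_sq
  filter_upwards [condVar_ae_eq_condExp_sq_sub_sq_condExp hm hδX,
    condVar_ae_eq_condExp_sq_sub_sq_condExp hm hX,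
    condExp_mul_of_stronglyMeasurable_left (hδ.pow 2) hδX₂ hX.integrable_sq,
    condExp_mul_of_stronglyMeasurable_left hδ (hδX.integrable one_le_two)
      (hX.integrable one_le_two)] with ω hVar hVarX h₁ h₂
  simp only [hsq, Pi.sub_apply, Pi.mul_apply, Pi.pow_apply] at *
  rw [hVar, hVarX, h₁, h₂]
  ring

end ConditionalMoments

section Integrability

open Filter Topology

variable {m m0 : MeasurableSpace Ω} {μ : Measure Ω}

theorem integrable_of_monotone_of_integral_le {F : ℕ → Ω → ℝ} {f : Ω → ℝ} {C : ℝ}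
    (hF : ∀ n, Integrable (F n) μ) (hF₀ : ∀ n, 0 ≤ F n) (hmono : ∀ ω, Monotone fun n => F n ω)
    (hlim : ∀ ω, Tendsto (fun n => F n ω) atTop (𝓝 (f ω))) (hC : ∀ n, ∫ ω, F n ω ∂μ ≤ C) :
    Integrable f μ := by
  have hf₀ : 0 ≤ f := fun ω => ge_of_tendsto' (hlim ω) fun n => hF₀ n ω
  refine ⟨aestronglyMeasurable_of_tendsto_ae atTop (fun n => (hF n).1) (ae_of_all _ hlim), ?_⟩
  rw [hasFiniteIntegral_iff_ofReal (ae_of_all _ hf₀)]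
  have hlint : Tendsto (fun n => ∫⁻ ω, ENNReal.ofReal (F n ω) ∂μ) atTop
      (𝓝 (∫⁻ ω, ENNReal.ofReal (f ω) ∂μ)) :=
    lintegral_tendsto_of_tendsto_of_monotone (fun n => (hF n).1.aemeasurable.ennreal_ofReal)
      (ae_of_all _ fun ω _ _ hab => ENNReal.ofReal_le_ofReal (hmono ω hab))
      (ae_of_all _ fun ω => ENNReal.tendsto_ofReal (hlim ω))
  refine lt_of_le_of_lt (le_of_tendsto' hlint fun n => ?_) (ENNReal.ofReal_lt_top (r := C))
  rw [← ofReal_integral_eq_lintegral_ofReal (hF n) (ae_of_all _ (hF₀ n))]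
  exact ENNReal.ofReal_le_ofReal (hC n)

variable [IsFiniteMeasure μ] {g h : Ω → ℝ}

theorem integrable_mul_of_integrable_mul_condExp (hm : m ≤ m0) (hg : StronglyMeasurable[m] g)
    (hg₀ : 0 ≤ g) (hh : Integrable h μ) (hh₀ : 0 ≤ h) (hgh : Integrable (g * μ[h | m]) μ) :
    Integrable (g * h) μ := by
  set G : ℕ → Ω → ℝ := fun n ω => min (g ω) n
  have hGm (n : ℕ) : StronglyMeasurable[m] (G n) := by fun_prop
  have hG₀ (n : ℕ) : 0 ≤ G n := fun ω => le_min (hg₀ ω) n.cast_nonneg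
  have hGle (n : ℕ) : G n ≤ g := fun ω => min_le_left _ _
  have hGbdd (n : ℕ) : ∀ᵐ ω ∂μ, ‖G n ω‖ ≤ n := ae_of_all _ fun ω => by
    rw [Real.norm_of_nonneg (hG₀ n ω)]; exact min_le_right _ _
  have hGh (n : ℕ) : Integrable (G n * h) μ :=
    hh.bdd_mul ((hGm n).mono hm).aestronglyMeasurable (hGbdd n)
  have hcondExp₀ : 0 ≤ᵐ[μ] μ[h | m] := condExp_nonneg (ae_of_all _ hh₀)
  refine integrable_of_monotone_of_integral_le (C := ∫ ω, (g * μ[h | m]) ω ∂μ) hGh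
    (fun n ω => mul_nonneg (hG₀ n ω) (hh₀ ω))
    (fun ω a b hab => mul_le_mul_of_nonneg_right
      (min_le_min_left _ (Nat.cast_le.2 hab)) (hh₀ ω)) (fun ω => ?_) (fun n => ?_)
  · refine tendsto_const_nhds.congr' ?_
    filter_upwards [eventually_ge_atTop ⌈g ω⌉₊] with n hn
    simp only [G, Pi.mul_apply, min_eq_left ((Nat.le_ceil _).trans (Nat.cast_le.2 hn))]
  · calc ∫ ω, (G n * h) ω ∂μ = ∫ ω, (μ[G n * h | m]) ω ∂μ := (integral_condExp hm).symm
      _ = ∫ ω, (G n * μ[h | m]) ω ∂μ :=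
        integral_congr_ae (condExp_mul_of_stronglyMeasurable_left (hGm n) (hGh n) hh)
      _ ≤ ∫ ω, (g * μ[h | m]) ω ∂μ := by
        refine integral_mono_ae (integrable_condExp.bdd_mul
          ((hGm n).mono hm).aestronglyMeasurable (hGbdd n)) hgh ?_
        filter_upwards [hcondExp₀] with ω hω
        exact mul_le_mul_of_nonneg_right (hGle n ω) hω

end Integrability

section Wealth

variable {S : ℕ → Ω → ℝ} {T : ℕ} {x : ℝ} {ϑ δ : ℕ → Ω → ℝ}

theorem wealth_eq_add_sum {k : ℕ} (hk : k ∈ Icc 1 T) :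
    wealth S x ϑ T = wealth S x ϑ (k - 1) + fun ω => ∑ i ∈ Icc k T, ϑ i ω * dS S i ω := by
  obtain ⟨hk₁, hkT⟩ := mem_Icc.mp hk
  have hsplit : Icc 1 T = Icc 1 (k - 1) ∪ Icc k T := by
    ext i; simp only [mem_union, mem_Icc]; omega
  have hdisj : Disjoint (Icc 1 (k - 1)) (Icc k T) :=
    disjoint_left.2 fun i hi hi' => by simp only [mem_Icc] at hi hi'; omega
  ext ω
  simp only [wealth, Pi.add_apply, hsplit, sum_union hdisj, add_assoc]

theorem wealth_perturb {k : ℕ} (hk : k ∈ Icc 1 T) :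
    wealth S x (perturb ϑ δ k) T = wealth S x ϑ T + δ k * dS S k := by
  ext ω
  simp only [wealth, Pi.add_apply, Pi.mul_apply, ← add_sum_erase _ _ hk]
  have hrest : ∑ i ∈ (Icc 1 T).erase k, perturb ϑ δ k i ω * dS S i ω
      = ∑ i ∈ (Icc 1 T).erase k, ϑ i ω * dS S i ω :=
    sum_congr rfl fun i hi => by rw [perturb, if_neg (ne_of_mem_erase hi)]
  rw [hrest, perturb, if_pos rfl]
  ring

end Wealth

section Admissible

variable [m0 : MeasurableSpace Ω] {μ : Measure Ω} {ℱ : Filtration ℕ m0} {S : ℕ → Ω → ℝ}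
  {T : ℕ} {x : ℝ} {ϑ δ : ℕ → Ω → ℝ}

theorem memLp_dS (hL2 : ∀ k, MemLp (S k) 2 μ) (k : ℕ) : MemLp (dS S k) 2 μ :=
  (hL2 k).sub (hL2 (k - 1))

theorem stronglyMeasurable_wealth (hS : StronglyAdapted ℱ S) {n : ℕ}
    (hϑ : ∀ i ∈ Icc 1 n, StronglyMeasurable[ℱ (i - 1)] (ϑ i)) :
    StronglyMeasurable[ℱ n] (wealth S x ϑ n) := by
  refine stronglyMeasurable_const.add (Finset.stronglyMeasurable_fun_sum _ fun i hi => ?_)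
  obtain ⟨hi₁, hin⟩ := mem_Icc.mp hi
  have hdS : StronglyMeasurable[ℱ i] (dS S i) :=
    (hS i).sub ((hS (i - 1)).mono (ℱ.mono (Nat.sub_le i 1)))
  exact ((hϑ i hi).mono (ℱ.mono (by omega))).mul (hdS.mono (ℱ.mono hin))

theorem Admissible.memLp_mul_dA (hϑ : Admissible μ ℱ S T ϑ) {i : ℕ} (hi : i ∈ Icc 1 T) :
    MemLp (ϑ i * dA μ ℱ S i) 2 μ := by
  have hmeas (j : ℕ) (hj : j ∈ Icc 1 T) : AEStronglyMeasurable (ϑ j * dA μ ℱ S j) μ :=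
    (((hϑ.1 j hj).mul stronglyMeasurable_condExp).mono (ℱ.le _)).aestronglyMeasurable
  have hsum : MemLp (fun ω => ∑ j ∈ Icc 1 T, |ϑ j ω * dA μ ℱ S j ω|) 2 μ :=
    (memLp_two_iff_integrable_sq (Finset.aestronglyMeasurable_fun_sum _
      fun j hj => (hmeas j hj).norm)).2 hϑ.2.2
  refine hsum.of_le (hmeas i hi) (ae_of_all _ fun ω => ?_)
  rw [Real.norm_eq_abs, Real.norm_of_nonneg (sum_nonneg fun j _ => abs_nonneg _)]
  exact single_le_sum (f := fun j => |ϑ j ω * dA μ ℱ S j ω|) (fun j _ => abs_nonneg _) hi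

variable [IsFiniteMeasure μ]

theorem Admissible.memLp_mul_dM (hL2 : ∀ k, MemLp (S k) 2 μ) (hϑ : Admissible μ ℱ S T ϑ)
    {i : ℕ} (hi : i ∈ Icc 1 T) : MemLp (ϑ i * dM μ ℱ S i) 2 μ := by
  have hϑi : StronglyMeasurable[ℱ (i - 1)] (ϑ i ^ 2) := (hϑ.1 i hi).pow 2
  have hdM : MemLp (dM μ ℱ S i) 2 μ :=
    (memLp_dS hL2 i).sub ((memLp_dS hL2 i).condExp one_le_two)
  have hcondExp₀ : ∀ᵐ ω ∂μ, ∀ j ∈ Icc 1 T, 0 ≤ (μ[dM μ ℱ S j ^ 2 | ℱ (j - 1)]) ω :=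
    (Filter.eventually_all_finset _).2 fun j _ => condExp_nonneg (ae_of_all _ fun ω => sq_nonneg _)
  have hbound : Integrable (ϑ i ^ 2 * μ[dM μ ℱ S i ^ 2 | ℱ (i - 1)]) μ := by
    refine hϑ.2.1.mono' ((hϑi.mul stronglyMeasurable_condExp).mono (ℱ.le _)).aestronglyMeasurable ?_
    filter_upwards [hcondExp₀] with ω hω
    rw [Pi.mul_apply, Pi.pow_apply, Real.norm_of_nonneg (mul_nonneg (sq_nonneg _) (hω i hi))]
    exact single_le_sum (f := fun j => ϑ j ω ^ 2 * (μ[dM μ ℱ S j ^ 2 | ℱ (j - 1)]) ω)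
      (fun j hj => mul_nonneg (sq_nonneg _) (hω j hj)) hi
  refine (memLp_two_iff_integrable_sq (((hϑ.1 i hi).mono (ℱ.le _)).aestronglyMeasurable.mul
    hdM.1)).2 ?_
  change Integrable ((ϑ i * dM μ ℱ S i) ^ 2) μ
  rw [mul_pow]
  exact integrable_mul_of_integrable_mul_condExp (ℱ.le _) hϑi (fun ω => sq_nonneg _)
    hdM.integrable_sq (fun ω => sq_nonneg _) hbound

theorem Admissible.memLp_mul_dS (hL2 : ∀ k, MemLp (S k) 2 μ) (hϑ : Admissible μ ℱ S T ϑ)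
    {i : ℕ} (hi : i ∈ Icc 1 T) : MemLp (ϑ i * dS S i) 2 μ := by
  have hdS : dS S i = dM μ ℱ S i + dA μ ℱ S i := by ext ω; simp [dM]
  rw [hdS, mul_add]
  exact (hϑ.memLp_mul_dM hL2 hi).add (hϑ.memLp_mul_dA hi)

theorem Admissible.memLp_sum_mul_dS (hL2 : ∀ k, MemLp (S k) 2 μ) (hϑ : Admissible μ ℱ S T ϑ)
    {s : Finset ℕ} (hs : s ⊆ Icc 1 T) : MemLp (fun ω => ∑ i ∈ s, ϑ i ω * dS S i ω) 2 μ :=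
  memLp_finsetSum _ fun _ hi => hϑ.memLp_mul_dS hL2 (hs hi)

theorem Admissible.memLp_wealth (hL2 : ∀ k, MemLp (S k) 2 μ) (hϑ : Admissible μ ℱ S T ϑ)
    {n : ℕ} (hn : n ≤ T) : MemLp (wealth S x ϑ n) 2 μ :=
  (memLp_const x).add (hϑ.memLp_sum_mul_dS hL2 (Icc_subset_Icc_right hn))

end Admissible

theorem local_perturbation_formula_general
    {Ω : Type*} [m0 : MeasurableSpace Ω] (μ : Measure Ω) [IsProbabilityMeasure μ]
    (T : ℕ) (ℱ : Filtration ℕ m0)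
    (S : ℕ → Ω → ℝ) (hAdapted : StronglyAdapted ℱ S) (hL2 : ∀ k, MemLp (S k) 2 μ)
    (x γ : ℝ)
    (ϑ δ : ℕ → Ω → ℝ) (hϑ : Admissible μ ℱ S T ϑ) (hδ : Admissible μ ℱ S T δ)
    (k : ℕ) (hk : k ∈ Finset.Icc 1 T) :
    ∀ᵐ ω ∂μ,
      U μ ℱ S T x γ ϑ (k - 1) ω - U μ ℱ S T x γ (perturb ϑ δ k) (k - 1) ω =
        -(δ k ω) * ((μ[dS S k | ℱ (k - 1)]) ω
            - γ * condCov μ (ℱ (k - 1)) (dS S k)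
                (fun ω' => ∑ i ∈ Finset.Icc k T, ϑ i ω' * dS S i ω') ω)
          + γ / 2 * (δ k ω) ^ 2 * condVar μ (ℱ (k - 1)) (dS S k) ω := by
  obtain ⟨hk₁, hkT⟩ := mem_Icc.mp hk
  simp only [U, wealth_perturb hk, wealth_eq_add_sum hk]
  set Y := fun ω' => ∑ i ∈ Icc k T, ϑ i ω' * dS S i ω'
  set c := wealth S x ϑ (k - 1)
  have hm : ℱ (k - 1) ≤ m0 := ℱ.le _
  have hδk : StronglyMeasurable[ℱ (k - 1)] (δ k) := hδ.1 k hk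
  have hc_meas : StronglyMeasurable[ℱ (k - 1)] c := stronglyMeasurable_wealth hAdapted
    fun i hi => hϑ.1 i (Icc_subset_Icc_right (by omega) hi)
  have hc : MemLp c 2 μ := hϑ.memLp_wealth hL2 (by omega)
  have hY : MemLp Y 2 μ := hϑ.memLp_sum_mul_dS hL2 (Icc_subset_Icc_left hk₁)
  have hZ : MemLp (dS S k) 2 μ := memLp_dS hL2 k
  have hW : MemLp (δ k * dS S k) 2 μ := hδ.memLp_mul_dS hL2 hk
  filter_upwards [condExp_add (m := ℱ (k - 1)) ((hc.add hY).integrable one_le_two)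
      (hW.integrable one_le_two),
    condExp_mul_of_stronglyMeasurable_left hδk (hW.integrable one_le_two)
      (hZ.integrable one_le_two),
    condVar_add hm (hc.add hY) hW, condCov_mul_left_of_stronglyMeasurable hδk hZ hW (hc.add hY),
    condCov_add_right_of_stronglyMeasurable hm hc_meas hZ hc hY,
    condVar_mul_of_stronglyMeasurable hm hδk hZ hW] with ω hmean hmeanW hvar hcovW hcov hvarW
  simp only [Pi.add_apply, Pi.mul_apply, Pi.pow_apply, Pi.ofNat_apply] at *
  rw [hmean, hvar, condCov_comm, hmeanW, hcovW, hcov, hvarW]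
  ring

/-- the effect of a local perturbation at time `k` on the conditional
mean–variance criterion at time `k-1`. -/
theorem local_perturbation_formula
    {Ω : Type*} [m0 : MeasurableSpace Ω] (μ : Measure Ω) [IsProbabilityMeasure μ]
    (T : ℕ) (hT : 1 ≤ T) (ℱ : Filtration ℕ m0)
    (S : ℕ → Ω → ℝ) (hAdapted : StronglyAdapted ℱ S) (hL2 : ∀ k, MemLp (S k) 2 μ)
    (x γ : ℝ) (hγ : 0 < γ)
    (ϑ δ : ℕ → Ω → ℝ) (hϑ : Admissible μ ℱ S T ϑ) (hδ : Admissible μ ℱ S T δ)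
    (k : ℕ) (hk : k ∈ Finset.Icc 1 T) :
    ∀ᵐ ω ∂μ,
      U μ ℱ S T x γ ϑ (k - 1) ω - U μ ℱ S T x γ (perturb ϑ δ k) (k - 1) ω =
        -(δ k ω) * ((μ[dS S k | ℱ (k - 1)]) ω
            - γ * condCov μ (ℱ (k - 1)) (dS S k)
                (fun ω' => ∑ i ∈ Finset.Icc k T, ϑ i ω' * dS S i ω') ω)
          + γ / 2 * (δ k ω) ^ 2 * condVar μ (ℱ (k - 1)) (dS S k) ω :=
  local_perturbation_formula_general (m0 := m0) μ T ℱ S hAdapted hL2 x γ ϑ δ hϑ hδ k hk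

end TCMV
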